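/- Let ℓ ≥ 7 be a prime, K a quadratic field, and β a prime of the ring of integers of K lying over a rational prime ℓ' ≠ ℓ. If the residue field O_K/β contains an element of the form ζ + ζ^{-1} with ζ a primitive ℓ-th root of unity in an algebraic closure, then (ℓ')^4 ≡ 1 (mod ℓ); in particular ℓ' ≠ 2 and ℓ' ≠ 3. -/
import Mathlib

open NumberField

set_option synthInstance.maxHeartbeats 1000000
set_option maxHeartbeats 1600000

/-- Let `ℓ ≥ 7` be a prime, `K` a quadratic field, and `β` a prime of `𝓞 K`
lying over a rational prime `ℓ' ≠ ℓ`. If the residue field `𝓞 K ⧸ β` contains an element of the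
form `ζ + ζ⁻¹` with `ζ` a primitive `ℓ`-th root of unity in an algebraic closure of the residue
field, then `ℓ'^4 ≡ 1 (mod ℓ)`; in particular `ℓ' ≠ 2` and `ℓ' ≠ 3`. -/
theorem stmt3 (ℓ ℓ' : ℕ) (hp : ℓ.Prime) (hℓ : 7 ≤ ℓ) (hp' : ℓ'.Prime) (hne : ℓ' ≠ ℓ)
    (K : Type*) [Field K] [NumberField K] (hK : Module.finrank ℚ K = 2)
    (β : Ideal (𝓞 K)) [hβ : β.IsMaximal] (hover : ((ℓ' : 𝓞 K)) ∈ β)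
    (hres : ∃ (E : Type) (_ : Field E) (_ : IsAlgClosed E) (f : (𝓞 K ⧸ β) →+* E)
      (ζ : E), IsPrimitiveRoot ζ ℓ ∧ ∃ x : 𝓞 K ⧸ β, f x = ζ + ζ⁻¹) :
    ℓ' ^ 4 ≡ 1 [MOD ℓ] ∧ ℓ' ≠ 2 ∧ ℓ' ≠ 3 := by
  obtain ⟨E, _, _, f, ζ, hζ, x, hx⟩ := hres
  letI : Field (𝓞 K ⧸ β) := Ideal.Quotient.field β
  -- the norm of β divides ℓ'^2
  have hnorm : (Ideal.absNorm β : ℤ) ∣ Algebra.norm ℤ ((ℓ' : 𝓞 K)) :=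
    Ideal.absNorm_dvd_norm_of_mem hover
  have hnormval : Algebra.norm ℤ ((ℓ' : 𝓞 K)) = (ℓ' : ℤ) ^ 2 := by
    rw [← map_natCast (algebraMap ℤ (𝓞 K)) ℓ',
      Algebra.norm_algebraMap_of_basis (Module.Free.chooseBasis ℤ (𝓞 K)),
      ← Module.finrank_eq_card_chooseBasisIndex, RingOfIntegers.rank, hK]
  have hdvd2 : Ideal.absNorm β ∣ ℓ' ^ 2 := by
    rw [hnormval] at hnorm
    exact_mod_cast hnorm
  -- the residue field
  have hcard : Nat.card (𝓞 K ⧸ β) = Ideal.absNorm β := by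
    rw [Ideal.absNorm_apply, Submodule.cardQuot_apply]
  have hq0 : Nat.card (𝓞 K ⧸ β) ≠ 0 := by
    rw [hcard]
    intro h
    rw [h] at hdvd2
    exact (pow_ne_zero 2 hp'.ne_zero) (Nat.eq_zero_of_zero_dvd hdvd2)
  have hfin : Finite (𝓞 K ⧸ β) := (Nat.card_ne_zero.mp hq0).2
  have : Fintype (𝓞 K ⧸ β) := Fintype.ofFinite _
  set q := Fintype.card (𝓞 K ⧸ β) with hqdef
  have hqcard : q = Ideal.absNorm β := by rw [← hcard, Nat.card_eq_fintype_card]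
  have hqdvd : q ∣ ℓ' ^ 2 := hqcard ▸ hdvd2
  haveI hnt : Nontrivial (𝓞 K ⧸ β) := Ideal.Quotient.nontrivial_iff.mpr hβ.ne_top
  have hq1 : 1 < q := @Fintype.one_lt_card _ _ hnt
  -- characteristic
  have hl'F : ((ℓ' : ℕ) : 𝓞 K ⧸ β) = 0 := by
    rw [← map_natCast (Ideal.Quotient.mk β)]
    exact Ideal.Quotient.eq_zero_iff_mem.mpr hover
  have hcharF : CharP (𝓞 K ⧸ β) ℓ' := (CharP.charP_iff_prime_eq_zero hp').mpr hl'F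
  have hcharE : CharP E ℓ' := charP_of_injective_ringHom f.injective ℓ'
  have : Fact ℓ'.Prime := ⟨hp'⟩
  -- q is a power of ℓ'
  obtain ⟨i, hi2, hqi⟩ := (Nat.dvd_prime_pow hp').mp hqdvd
  -- Frobenius fixes f x = ζ + ζ⁻¹
  have hfrob : (ζ + ζ⁻¹) ^ q = ζ + ζ⁻¹ := by
    rw [← hx, ← map_pow, hqdef]
    exact congrArg f (FiniteField.pow_card x)
  have hζ0 : ζ ≠ 0 := hζ.ne_zero (by omega)
  have hη0 : ζ ^ q ≠ 0 := pow_ne_zero _ hζ0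
  have hexp : (ζ + ζ⁻¹) ^ q = ζ ^ q + (ζ ^ q)⁻¹ := by
    rw [hqi, add_pow_char_pow, inv_pow]
  set η := ζ ^ q with hηdef
  have heq : η + η⁻¹ = ζ + ζ⁻¹ := by rw [← hexp, hfrob]
  have hkey : (η - ζ) * (η * ζ - 1) = 0 := by
    have h := heq
    field_simp at h
    linear_combination h
  have hζq2 : ζ ^ (q * q) = ζ := by
    rcases mul_eq_zero.mp hkey with h | h
    · have hηζ : η = ζ := sub_eq_zero.mp h
      rw [pow_mul, ← hηdef, hηζ, ← hηdef, hηζ]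
    · have hηζ : η = ζ⁻¹ := eq_inv_of_mul_eq_one_left (sub_eq_zero.mp h)
      rw [pow_mul, ← hηdef, hηζ, inv_pow, ← hηdef, hηζ, inv_inv]
  have hpow1 : ζ ^ (q * q - 1) = 1 := by
    have h1 : q * q - 1 + 1 = q * q := Nat.succ_pred_eq_of_pos (Nat.mul_pos (by omega) (by omega))
    have := hζq2
    rw [← h1, pow_succ] at this
    exact mul_right_cancel₀ hζ0 (by rw [this, one_mul])
  have hldvd : ℓ ∣ q * q - 1 := (hζ.pow_eq_one_iff_dvd _).mp hpow1
  -- conclude ℓ ∣ ℓ'^4 - 1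
  have hmain : ℓ ∣ ℓ' ^ 4 - 1 := by
    have hi1 : 1 ≤ i := by
      rcases Nat.eq_zero_or_pos i with rfl | h
      · rw [pow_zero] at hqi; omega
      · exact h
    have hi12 : i = 1 ∨ i = 2 := by omega
    rcases hi12 with h | h <;> subst h
    · have hqq : q * q = ℓ' ^ 2 := by rw [hqi]; ring
      rw [hqq] at hldvd
      refine hldvd.trans ?_
      have hd : ℓ' ^ 2 - 1 ^ 2 ∣ (ℓ' ^ 2) ^ 2 - 1 ^ 2 := Nat.sub_dvd_pow_sub_pow _ _ 2
      rw [one_pow, ← pow_mul] at hd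
      norm_num at hd
      exact hd
    · have hqq : q * q = ℓ' ^ 4 := by rw [hqi]; ring
      rwa [hqq] at hldvd
  have h14 : 1 ≤ ℓ' ^ 4 := Nat.one_le_pow _ _ hp'.pos
  refine ⟨((Nat.modEq_iff_dvd' h14).mpr hmain).symm, ?_, ?_⟩
  · rintro rfl
    norm_num at hmain
    have := Nat.le_of_dvd (by norm_num) hmain
    interval_cases ℓ <;> first | omega | exact absurd hp (by norm_num)
  · rintro rfl
    norm_num at hmain
    have := Nat.le_of_dvd (by norm_num) hmain
    interval_cases ℓ <;> first | omega | exact absurd hp (by norm_num)
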